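/- arXiv:2508.00597 — 5 statements merged into one kernel-verified Lean document; each statement's English description precedes it below -/
import Mathlib

section
/- Let $G$ be a group, $k$ a field, $\omega: G^3 \to k^*$ a normalized 3-cocycle (i.e. $\omega(x,y,z)=1$ whenever one of $x,y,z$ is the identity, and $\omega(y,z,t)\omega(x,yz,t)\omega(x,y,z)=\omega(x,y,zt)\omega(xy,z,t)$ for all $x,y,z,t$), and $\mathfrak{g}\in G$. Define $\flat_{\mathfrak{g}}\omega(x,y) = \omega(\mathfrak{g},x,y)\omega(x,y,\mathfrak{g})/\omega(x,\mathfrak{g},y)$. Then $\flat_{\mathfrak{g}}\omega$ is a normalized 2-cocycle on $G$ if and only if $\omega(\mathfrak{g}x,y,z)\omega(x,\mathfrak{g}y,z)\omega(x,y,\mathfrak{g}z) = \omega(x\mathfrak{g},y,z)\omega(x,y\mathfrak{g},z)\omega(x,y,z\mathfrak{g})$ for all $x,y,z\in G$. -/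
/-!
The coboundary of `♭_g ω` is computed from four instances of the 3-cocycle identity, with `g`
inserted in each of the four slots: `δ(♭_g ω)(x,y,z)` equals
`ω(gx,y,z) ω(x,gy,z) ω(x,y,gz) / (ω(xg,y,z) ω(x,yg,z) ω(x,y,zg))`.
So `♭_g ω` satisfies the 2-cocycle identity exactly when this quotient is trivial, and the
normalization of `♭_g ω` is inherited from that of `ω`.
-/

/-- The 2-cochain `♭_g ω (x,y) = ω(g,x,y) ω(x,y,g) / ω(x,g,y)`. -/
def flatCocycle {G : Type*} [Group G] {k : Type*} [Field k]
    (ω : G → G → G → kˣ) (g : G) : G → G → kˣ :=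
  fun x y => ω g x y * ω x y g / ω x g y

section Coboundary

variable {G M : Type*} [Group G] [CommGroup M] (ω : G → G → G → M)

theorem flat_coboundary_eq_div
    (hcoc : ∀ x y z t : G,
      ω y z t * ω x (y * z) t * ω x y z = ω x y (z * t) * ω (x * y) z t)
    (g x y z : G) :
    ω g x y * ω x y g / ω x g y * (ω g (x * y) z * ω (x * y) z g / ω (x * y) g z) /
        (ω g x (y * z) * ω x (y * z) g / ω x g (y * z) * (ω g y z * ω y z g / ω y g z)) =
      ω (g * x) y z * ω x (g * y) z * ω x y (g * z) /
        (ω (x * g) y z * ω x (y * g) z * ω x y (z * g)) := by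
  have h (x y z t : G) := congrArg Additive.ofMul (hcoc x y z t)
  simp only [ofMul_mul] at h
  apply Additive.ofMul.injective
  simp only [ofMul_mul, ofMul_div]
  linear_combination (norm := abel) h g x y z - h x g y z + h x y g z - h x y z g

end Coboundary

section FlatCocycle

variable {G : Type*} [Group G] {k : Type*} [Field k] (ω : G → G → G → kˣ)

theorem flatCocycle_one_left (hnorm : ∀ x y z : G, x = 1 ∨ y = 1 ∨ z = 1 → ω x y z = 1)
    (g x : G) : flatCocycle ω g 1 x = 1 := by
  simp [flatCocycle, hnorm g 1 x (by simp), hnorm 1 x g (by simp), hnorm 1 g x (by simp)]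

theorem flatCocycle_one_right (hnorm : ∀ x y z : G, x = 1 ∨ y = 1 ∨ z = 1 → ω x y z = 1)
    (g x : G) : flatCocycle ω g x 1 = 1 := by
  simp [flatCocycle, hnorm g x 1 (by simp), hnorm x 1 g (by simp), hnorm x g 1 (by simp)]

theorem flatCocycle_mul_eq_iff
    (hcoc : ∀ x y z t : G,
      ω y z t * ω x (y * z) t * ω x y z = ω x y (z * t) * ω (x * y) z t)
    (g x y z : G) :
    flatCocycle ω g x y * flatCocycle ω g (x * y) z =
        flatCocycle ω g x (y * z) * flatCocycle ω g y z ↔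
      ω (g * x) y z * ω x (g * y) z * ω x y (g * z) =
        ω (x * g) y z * ω x (y * g) z * ω x y (z * g) := by
  unfold flatCocycle
  rw [← div_eq_one, flat_coboundary_eq_div ω hcoc, div_eq_one]

end FlatCocycle

/-- for a normalized 3-cocycle `ω` and `g ∈ G`, `♭_g ω` is a
normalized 2-cocycle iff the displayed identity holds. -/
theorem flatCocycle_isTwoCocycle_iff {G : Type*} [Group G] {k : Type*} [Field k]
    (ω : G → G → G → kˣ)
    (hnorm : ∀ x y z : G, x = 1 ∨ y = 1 ∨ z = 1 → ω x y z = 1)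
    (hcoc : ∀ x y z t : G,
      ω y z t * ω x (y * z) t * ω x y z = ω x y (z * t) * ω (x * y) z t)
    (g : G) :
    ((∀ x : G, flatCocycle ω g 1 x = 1 ∧ flatCocycle ω g x 1 = 1) ∧
      (∀ x y z : G, flatCocycle ω g x y * flatCocycle ω g (x * y) z =
        flatCocycle ω g x (y * z) * flatCocycle ω g y z)) ↔
    (∀ x y z : G,
      ω (g * x) y z * ω x (g * y) z * ω x y (g * z) =
        ω (x * g) y z * ω x (y * g) z * ω x y (z * g)) := by
  simp only [flatCocycle_one_left ω hnorm, flatCocycle_one_right ω hnorm,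
    flatCocycle_mul_eq_iff ω hcoc, and_self, implies_true, true_and]
end

section
/- Let $m\geq 2$ and $0\leq c\leq m-1$ be integers. If there exist integers $f,\lambda$ with $0\leq f,\lambda\leq m-1$ and an integer $k$ such that $2cf^2 + 2m\lambda f - (2k+1)m^2 = 0$, then $\gcd(c, m)$ is even. -/
/-!
Reducing `2cf² + 2mλf = (2k+1)m²` mod 2 shows that `m` is even. If `c` were odd, then for
`m = 2n` the equation forces `f` to be even, and `f = 2g` gives a solution for `n`; infinite
descent on `|m|` then contradicts `m ≠ 0`.
-/

def HasSolution (c m : ℤ) : Prop :=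
  ∃ f lam k : ℤ, 2 * c * f ^ 2 + 2 * m * lam * f = (2 * k + 1) * m ^ 2

namespace HasSolution

variable {c m : ℤ}

theorem two_dvd_modulus (h : HasSolution c m) : 2 ∣ m := by
  obtain ⟨f, lam, k, heq⟩ := h
  by_contra hm
  have hodd : Odd ((2 * k + 1) * m ^ 2) :=
    (odd_two_mul_add_one k).mul (Int.not_even_iff_odd.mp (by rwa [even_iff_two_dvd])).pow
  exact Int.not_even_iff_odd.mpr hodd (heq ▸ ⟨c * f ^ 2 + m * lam * f, by ring⟩)

theorem of_two_mul (hc : ¬ 2 ∣ c) {n : ℤ} (h : HasSolution c (2 * n)) : HasSolution c n := by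
  obtain ⟨f, lam, k, heq⟩ := h
  have hcf : 2 ∣ c * f ^ 2 := ⟨(2 * k + 1) * n ^ 2 - n * lam * f, by linarith⟩
  obtain ⟨g, rfl⟩ : 2 ∣ f :=
    Int.prime_two.dvd_of_dvd_pow ((Int.prime_two.dvd_mul.mp hcf).resolve_left hc)
  exact ⟨g, lam, k, by linarith⟩

theorem two_dvd_coeff (hm : m ≠ 0) (h : HasSolution c m) : 2 ∣ c := by
  by_contra hc
  induction hN : m.natAbs using Nat.strong_induction_on generalizing m with
  | _ N ih =>
    obtain ⟨n, rfl⟩ := h.two_dvd_modulus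
    exact ih n.natAbs (by omega) (by omega) (h.of_two_mul hc) rfl

end HasSolution

theorem gcd_even_of_solution_general (m c : ℤ) (hm : 2 ≤ m)
    (h : ∃ f lam k : ℤ, 0 ≤ f ∧ f ≤ m - 1 ∧ 0 ≤ lam ∧ lam ≤ m - 1 ∧
      2 * c * f ^ 2 + 2 * m * lam * f - (2 * k + 1) * m ^ 2 = 0) :
    2 ∣ Int.gcd c m := by
  obtain ⟨f, lam, k, -, -, -, -, heq⟩ := h
  have hsol : HasSolution c m := ⟨f, lam, k, by linarith⟩
  exact Int.dvd_gcd (hsol.two_dvd_coeff (by omega)) hsol.two_dvd_modulus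

/-- let `m ≥ 2` and `0 ≤ c ≤ m-1`.  If there are integers
`f, λ ∈ {0, …, m-1}` and `k` with `2cf² + 2mλf - (2k+1)m² = 0`, then
`gcd(c, m)` is even. -/
theorem gcd_even_of_solution (m c : ℤ) (hm : 2 ≤ m) (hc0 : 0 ≤ c) (hc1 : c ≤ m - 1)
    (h : ∃ f lam k : ℤ, 0 ≤ f ∧ f ≤ m - 1 ∧ 0 ≤ lam ∧ lam ≤ m - 1 ∧
      2 * c * f ^ 2 + 2 * m * lam * f - (2 * k + 1) * m ^ 2 = 0) :
    2 ∣ Int.gcd c m :=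
  gcd_even_of_solution_general m c hm h
end

section
/- Let $m\geq 2$ and $0\leq c\leq m-1$ be integers such that $d := \gcd(c,m)$ is even (in particular $d \neq 0$, so $m$ is even). Then there exist integers $f, \lambda, k$ with $0\leq f \leq m-1$, $0 \leq \lambda \leq m-1$, such that $2cf^2 + 2m\lambda f = (2k+1)m^2$. -/
/-!
Write `c = 2e` and `m = 2n` and take `f = n`: then `2cf² + 2mλf = (e + λ)m²`, and `λ ∈ {0, 1}`
can be chosen to make `e + λ` odd.
-/

theorem Int.two_dvd_of_two_dvd_gcd {a b : ℤ} (h : 2 ∣ Int.gcd a b) : 2 ∣ a ∧ 2 ∣ b :=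
  have h' : (2 : ℤ) ∣ Int.gcd a b := by exact_mod_cast h
  ⟨h'.trans (Int.gcd_dvd_left a b), h'.trans (Int.gcd_dvd_right a b)⟩

theorem Int.exists_odd_add_of_nonneg_of_le_one (e : ℤ) :
    ∃ lam : ℤ, 0 ≤ lam ∧ lam ≤ 1 ∧ Odd (e + lam) := by
  rcases Int.even_or_odd e with he | ho
  · exact ⟨1, zero_le_one, le_rfl, he.add_one⟩
  · exact ⟨0, le_rfl, zero_le_one, by simpa using ho⟩

theorem solution_of_gcd_even_general (m c : ℤ) (hm : 2 ≤ m)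
    (hd : 2 ∣ Int.gcd c m) :
    ∃ f lam k : ℤ, 0 ≤ f ∧ f ≤ m - 1 ∧ 0 ≤ lam ∧ lam ≤ m - 1 ∧
      2 * c * f ^ 2 + 2 * m * lam * f = (2 * k + 1) * m ^ 2 := by
  obtain ⟨⟨e, rfl⟩, ⟨n, rfl⟩⟩ := Int.two_dvd_of_two_dvd_gcd hd
  obtain ⟨lam, hlam₀, hlam₁, k, hk⟩ := Int.exists_odd_add_of_nonneg_of_le_one e
  refine ⟨n, lam, k, by omega, by omega, hlam₀, by omega, ?_⟩
  calc 2 * (2 * e) * n ^ 2 + 2 * (2 * n) * lam * n = (e + lam) * (2 * n) ^ 2 := by ring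
    _ = (2 * k + 1) * (2 * n) ^ 2 := by rw [hk]

/-- let `m ≥ 2` and `0 ≤ c ≤ m-1` with `gcd(c, m)` even.  Then there
exist integers `f, λ ∈ {0, …, m-1}` and `k` with `2cf² + 2mλf = (2k+1)m²`. -/
theorem solution_of_gcd_even (m c : ℤ) (hm : 2 ≤ m) (hc0 : 0 ≤ c) (hc1 : c ≤ m - 1)
    (hd : 2 ∣ Int.gcd c m) :
    ∃ f lam k : ℤ, 0 ≤ f ∧ f ≤ m - 1 ∧ 0 ≤ lam ∧ lam ≤ m - 1 ∧
      2 * c * f ^ 2 + 2 * m * lam * f = (2 * k + 1) * m ^ 2 :=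
  solution_of_gcd_even_general m c hm hd
end

section
/- Every Hopf algebra automorphism $\varphi$ of the Sweedler 4-dimensional Hopf algebra $H_4$ over a field $k$ of characteristic $\neq 2$ satisfies $\varphi(g) = g$ and $\varphi(x) = \omega x$ for some nonzero scalar $\omega \in k$. -/
open scoped TensorProduct

/-!
Since `φ` commutes with `Δ`, `φ g` is grouplike, and once `φ g = g` is known, `φ x` is
`(g, 1)`-skew primitive. Comparing coordinates in the basis `bᵢ ⊗ bⱼ`, the only nonzero
grouplikes are `1` and `g`, so injectivity of `φ` forces `φ g = g`; the `(g, 1)`-skew primitives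
are the `a • (1 - g) + c • x`, whose square is `2a` times themselves. As `φ x ≠ 0` squares to
`φ (x ^ 2) = 0`, this gives `a = 0`.
-/

namespace Sweedler

variable {k A : Type*} [Field k] [Ring A] [Algebra k A] {g x : A}

theorem sq_smul_one_sub_add_smul (hg : g ^ 2 = 1) (hx : x ^ 2 = 0) (hxg : x * g = -(g * x))
    (a c : k) : (a • (1 - g) + c • x) ^ 2 = (2 * a) • (a • (1 - g) + c • x) := by
  rw [sq] at hg hx ⊢
  simp only [add_mul, mul_add, sub_mul, mul_sub, smul_mul_assoc, mul_smul_comm, one_mul, mul_one,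
    hg, hx, hxg, smul_zero]
  module

theorem comul_mul_eq (hg : g ^ 2 = 1) {Δ : A →ₐ[k] A ⊗[k] A}
    (hΔg : Δ g = g ⊗ₜ g) (hΔx : Δ x = g ⊗ₜ x + x ⊗ₜ 1) :
    Δ (g * x) = 1 ⊗ₜ (g * x) + (g * x) ⊗ₜ g := by
  rw [map_mul, hΔg, hΔx, mul_add, Algebra.TensorProduct.tmul_mul_tmul,
    Algebra.TensorProduct.tmul_mul_tmul, ← sq, hg, mul_one]

variable {b : Module.Basis (Fin 4) k A}

theorem eq_repr_smul_add (hb0 : b 0 = 1) (hb1 : b 1 = g) (hb2 : b 2 = x) (hb3 : b 3 = g * x)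
    (y : A) :
    y = b.repr y 0 • 1 + b.repr y 1 • g + b.repr y 2 • x + b.repr y 3 • (g * x) := by
  rw [← hb3, ← hb0, ← hb1, ← hb2, ← Fin.sum_univ_four (fun i ↦ b.repr y i • b i), b.sum_repr]

theorem comul_eq (hg : g ^ 2 = 1)
    (hb0 : b 0 = 1) (hb1 : b 1 = g) (hb2 : b 2 = x) (hb3 : b 3 = g * x)
    {Δ : A →ₐ[k] A ⊗[k] A} (hΔg : Δ g = g ⊗ₜ g) (hΔx : Δ x = g ⊗ₜ x + x ⊗ₜ 1) (y : A) :
    Δ y = b.repr y 0 • b.tensorProduct b (0, 0) + b.repr y 1 • b.tensorProduct b (1, 1)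
      + b.repr y 2 • (b.tensorProduct b (1, 2) + b.tensorProduct b (2, 0))
      + b.repr y 3 • (b.tensorProduct b (0, 3) + b.tensorProduct b (3, 1)) := by
  conv_lhs => rw [eq_repr_smul_add hb0 hb1 hb2 hb3 y]
  simp only [map_add, map_smul, Module.Basis.tensorProduct_apply, hb0, hb1, hb2, hb3, map_one,
    Algebra.TensorProduct.one_def, hΔg, hΔx, comul_mul_eq hg hΔg hΔx]

theorem eq_zero_or_eq_one_or_eq_of_tmul_self_eq_comul (hg : g ^ 2 = 1)
    (hb0 : b 0 = 1) (hb1 : b 1 = g) (hb2 : b 2 = x) (hb3 : b 3 = g * x)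
    {Δ : A →ₐ[k] A ⊗[k] A} (hΔg : Δ g = g ⊗ₜ g) (hΔx : Δ x = g ⊗ₜ x + x ⊗ₜ 1) {y : A}
    (hy : y ⊗ₜ y = Δ y) : y = 0 ∨ y = 1 ∨ y = g := by
  have coord (i j : Fin 4) :
      b.repr y i * b.repr y j = (b.tensorProduct b).repr (Δ y) (i, j) := by
    rw [← hy, Module.Basis.tensorProduct_repr_tmul_apply, smul_eq_mul, mul_comm]
  rw [comul_eq hg hb0 hb1 hb2 hb3 hΔg hΔx] at coord
  have h00 : b.repr y 0 * b.repr y 0 = b.repr y 0 := by simpa using coord 0 0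
  have h11 : b.repr y 1 * b.repr y 1 = b.repr y 1 := by simpa using coord 1 1
  have h01 : b.repr y 0 = 0 ∨ b.repr y 1 = 0 := by simpa using coord 0 1
  have h22 : b.repr y 2 = 0 := by simpa using coord 2 2
  have h33 : b.repr y 3 = 0 := by simpa using coord 3 3
  have idem0 := IsIdempotentElem.iff_eq_zero_or_one.mp h00
  have idem1 := IsIdempotentElem.iff_eq_zero_or_one.mp h11
  rw [eq_repr_smul_add hb0 hb1 hb2 hb3 y, h22, h33]
  rcases h01 with h0 | h1
  · rcases idem1 with h1 | h1 <;> simp [h0, h1]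
  · rcases idem0 with h0 | h0 <;> simp [h0, h1]

theorem eq_smul_one_sub_add_smul_of_tmul_add_tmul_eq_comul (hg : g ^ 2 = 1)
    (hb0 : b 0 = 1) (hb1 : b 1 = g) (hb2 : b 2 = x) (hb3 : b 3 = g * x)
    {Δ : A →ₐ[k] A ⊗[k] A} (hΔg : Δ g = g ⊗ₜ g) (hΔx : Δ x = g ⊗ₜ x + x ⊗ₜ 1) {y : A}
    (hy : g ⊗ₜ y + y ⊗ₜ 1 = Δ y) : y = b.repr y 0 • (1 - g) + b.repr y 2 • x := by
  have coord (i j : Fin 4) : (b.tensorProduct b).repr (b 1 ⊗ₜ y + y ⊗ₜ b 0) (i, j) =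
      (b.tensorProduct b).repr (Δ y) (i, j) := by
    rw [hb1, hb0, hy]
  rw [comul_eq hg hb0 hb1 hb2 hb3 hΔg hΔx] at coord
  have h10 : b.repr y 0 + b.repr y 1 = 0 := by
    simpa [Module.Basis.tensorProduct_repr_tmul_apply] using coord 1 0
  have h03 : b.repr y 3 = 0 := by
    simpa [Module.Basis.tensorProduct_repr_tmul_apply] using (coord 0 3).symm
  conv_lhs => rw [eq_repr_smul_add hb0 hb1 hb2 hb3 y, h03, eq_neg_of_add_eq_zero_right h10]
  module

end Sweedler

open Sweedler in
/-- every Hopf algebra automorphism `φ` of the Sweedler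
4-dimensional Hopf algebra `H₄` (presented here as a 4-dimensional `k`-algebra
with basis `1, g, x, gx`, relations `g² = 1`, `x² = 0`, `xg = -gx`, and
comultiplication `Δ(g) = g ⊗ g`, `Δ(x) = g ⊗ x + x ⊗ 1`) over a field of
characteristic `≠ 2` satisfies `φ(g) = g` and `φ(x) = ω • x` for some `ω ≠ 0`. -/
theorem sweedler_hopf_automorphism {k : Type*} [Field k] (hchar : (2 : k) ≠ 0)
    {A : Type*} [Ring A] [Algebra k A]
    (g x : A) (hg : g ^ 2 = 1) (hx : x ^ 2 = 0) (hxg : x * g = -(g * x))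
    (b : Module.Basis (Fin 4) k A)
    (hb0 : b 0 = 1) (hb1 : b 1 = g) (hb2 : b 2 = x) (hb3 : b 3 = g * x)
    (Δ : A →ₐ[k] A ⊗[k] A)
    (hΔg : Δ g = g ⊗ₜ[k] g) (hΔx : Δ x = g ⊗ₜ[k] x + x ⊗ₜ[k] 1)
    (φ : A ≃ₐ[k] A)
    (hφΔ : ∀ y : A, Δ (φ y) = (Algebra.TensorProduct.map φ.toAlgHom φ.toAlgHom) (Δ y)) :
    φ g = g ∧ ∃ ω : k, ω ≠ 0 ∧ φ x = ω • x := by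
  have hφg : φ g = g := by
    have hgrouplike : φ g ⊗ₜ φ g = Δ (φ g) := by rw [hφΔ, hΔg]; rfl
    rcases eq_zero_or_eq_one_or_eq_of_tmul_self_eq_comul hg hb0 hb1 hb2 hb3 hΔg hΔx hgrouplike
      with h | h | h
    · exact absurd (φ.map_eq_zero_iff.mp h) (hb1 ▸ b.ne_zero 1)
    · have hg1 : g = 1 := φ.injective (h.trans (map_one φ).symm)
      exact absurd (b.injective (by rw [hb1, hb0, hg1])) (by decide : (1 : Fin 4) ≠ 0)
    · exact h
  have hskew : g ⊗ₜ φ x + φ x ⊗ₜ 1 = Δ (φ x) := by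
    rw [hφΔ, hΔx, map_add, Algebra.TensorProduct.map_tmul, Algebra.TensorProduct.map_tmul]
    simp [hφg]
  have hφx := eq_smul_one_sub_add_smul_of_tmul_add_tmul_eq_comul hg hb0 hb1 hb2 hb3 hΔg hΔx hskew
  set a := b.repr (φ x) 0
  set c := b.repr (φ x) 2
  have hφx0 : φ x ≠ 0 := by simpa [hb2] using b.ne_zero 2
  have ha : (2 * a) • φ x = 0 := by
    calc (2 * a) • φ x = φ x ^ 2 := by rw [hφx, sq_smul_one_sub_add_smul hg hx hxg]
      _ = 0 := by rw [← map_pow, hx, map_zero]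
  have ha0 : a = 0 := by simpa [hchar, hφx0] using ha
  rw [ha0, zero_smul, zero_add] at hφx
  refine ⟨hφg, c, fun hc ↦ hφx0 ?_, hφx⟩
  rw [hφx, hc, zero_smul]
end

section
/- Let $G = C_{m_1}\times\cdots\times C_{m_n}$ be a finite abelian group with $n\geq 3$, and let $M^c_{rst}$ ($1\leq r<s<t\leq n$) be given integers, $M$ a positive integer. Then the following are equivalent for integers $f_1,\ldots,f_n$: (a) for all choices of integers $k_1,\ldots,k_n, j_1,\ldots,j_n$, $M$ divides $\sum_{1\leq r<s<t\leq n} M^c_{rst}(k_r j_s f_t + f_r k_s j_t - k_r f_s j_t)$; (b) for every pair $1\leq r<s\leq n$, $M$ divides $\sum_{u=1}^{r-1} M^c_{urs} f_u - \sum_{v=r+1}^{s-1} M^c_{rvs} f_v + \sum_{w=s+1}^{n} M^c_{rsw} f_w$. -/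
/-!
The sum in (a) is bilinear in `kk` and `jj`: regrouping its three triple sums by the pair of
indices carrying `kk` and `jj` turns it into `∑_{r<s} kk r * jj s * E r s`, where `E r s` is the
sum in (b). Testing with the indicator families `kk = δ_r`, `jj = δ_s` isolates each `E r s`.
-/

open Finset

theorem sum_Icc_sum_Icc_succ_comm {β : Type*} [AddCommMonoid β] {a : ℕ} (ha : 1 ≤ a) (n : ℕ)
    (g : ℕ → ℕ → β) :
    ∑ s ∈ Icc a n, ∑ t ∈ Icc (s + 1) n, g s t = ∑ t ∈ Icc a n, ∑ s ∈ Icc a (t - 1), g s t :=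
  sum_comm' fun s t => by simp only [mem_Icc]; omega

section Bilinear

variable {R : Type*} [CommRing R]

def bilinCoeff (n : ℕ) (Mc : ℕ → ℕ → ℕ → R) (f : ℕ → R) (r s : ℕ) : R :=
  (∑ u ∈ Icc 1 (r - 1), Mc u r s * f u) - (∑ v ∈ Icc (r + 1) (s - 1), Mc r v s * f v) +
    (∑ w ∈ Icc (s + 1) n, Mc r s w * f w)

theorem sum_triple_eq_sum_bilinCoeff (n : ℕ) (Mc : ℕ → ℕ → ℕ → R) (f kk jj : ℕ → R) :
    ∑ r ∈ Icc 1 n, ∑ s ∈ Icc (r + 1) n, ∑ t ∈ Icc (s + 1) n,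
        Mc r s t * (kk r * jj s * f t + f r * kk s * jj t - kk r * f s * jj t) =
      ∑ r ∈ Icc 1 n, ∑ s ∈ Icc (r + 1) n, kk r * jj s * bilinCoeff n Mc f r s := by
  have f_last : ∑ r ∈ Icc 1 n, ∑ s ∈ Icc (r + 1) n, ∑ t ∈ Icc (s + 1) n,
        Mc r s t * (kk r * jj s * f t) =
      ∑ r ∈ Icc 1 n, ∑ s ∈ Icc (r + 1) n, kk r * jj s * ∑ w ∈ Icc (s + 1) n, Mc r s w * f w := by
    simp only [mul_sum]
    exact sum_congr rfl fun r _ => sum_congr rfl fun s _ => sum_congr rfl fun t _ => by ring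
  -- `r` is moved innermost: `(r, s, t)` becomes `(u, r, s)`.
  have f_first : ∑ r ∈ Icc 1 n, ∑ s ∈ Icc (r + 1) n, ∑ t ∈ Icc (s + 1) n,
        Mc r s t * (f r * kk s * jj t) =
      ∑ r ∈ Icc 1 n, ∑ s ∈ Icc (r + 1) n, kk r * jj s * ∑ u ∈ Icc 1 (r - 1), Mc u r s * f u := by
    rw [sum_Icc_sum_Icc_succ_comm le_rfl]
    simp only [mul_sum]
    refine sum_congr rfl fun s _ => ?_
    rw [sum_comm]
    exact sum_congr rfl fun t _ => sum_congr rfl fun u _ => by ring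
  -- `s` is moved innermost: `(r, s, t)` becomes `(r, v, s)`.
  have f_middle : ∑ r ∈ Icc 1 n, ∑ s ∈ Icc (r + 1) n, ∑ t ∈ Icc (s + 1) n,
        Mc r s t * (kk r * f s * jj t) =
      ∑ r ∈ Icc 1 n, ∑ s ∈ Icc (r + 1) n, kk r * jj s *
        ∑ v ∈ Icc (r + 1) (s - 1), Mc r v s * f v := by
    refine sum_congr rfl fun r _ => ?_
    rw [sum_Icc_sum_Icc_succ_comm (Nat.le_add_left 1 r)]
    simp only [mul_sum]
    exact sum_congr rfl fun t _ => sum_congr rfl fun v _ => by ring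
  simp only [bilinCoeff, mul_add, mul_sub, sum_add_distrib, sum_sub_distrib]
    at f_last f_first f_middle ⊢
  rw [f_last, f_first, f_middle]
  ring

end Bilinear

theorem forall_dvd_sum_sum_mul_mul_iff {ι R : Type*} [CommSemiring R] (S : Finset ι)
    (T : ι → Finset ι) (M : R) (E : ι → ι → R) :
    (∀ x y : ι → R, M ∣ ∑ r ∈ S, ∑ s ∈ T r, x r * y s * E r s) ↔
      ∀ r ∈ S, ∀ s ∈ T r, M ∣ E r s := by
  classical
  constructor
  · intro h r hr s hs
    have h_rs := h (Pi.single r 1) (Pi.single s 1)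
    rwa [sum_eq_single_of_mem r hr fun r' _ hr' => by simp [hr'],
      sum_eq_single_of_mem s hs fun s' _ hs' => by simp [hs'],
      Pi.single_eq_same, Pi.single_eq_same, one_mul, one_mul] at h_rs
  · intro h x y
    exact dvd_sum fun r hr => dvd_sum fun s hs => (h r hr s hs).mul_left _

theorem divisibility_equivalence_general (n : ℕ) (M : ℤ)
    (Mc : ℕ → ℕ → ℕ → ℤ) (f : ℕ → ℤ) :
    (∀ kk jj : ℕ → ℤ,
      M ∣ ∑ r ∈ Icc 1 n, ∑ s ∈ Icc (r + 1) n, ∑ t ∈ Icc (s + 1) n,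
        Mc r s t * (kk r * jj s * f t + f r * kk s * jj t - kk r * f s * jj t)) ↔
    (∀ r s : ℕ, 1 ≤ r → r < s → s ≤ n →
      M ∣ ((∑ u ∈ Icc 1 (r - 1), Mc u r s * f u) -
            (∑ v ∈ Icc (r + 1) (s - 1), Mc r v s * f v) +
            (∑ w ∈ Icc (s + 1) n, Mc r s w * f w))) := by
  simp only [sum_triple_eq_sum_bilinCoeff]
  rw [forall_dvd_sum_sum_mul_mul_iff]
  simp only [mem_Icc]
  exact ⟨fun h r s hr hrs hsn => h r ⟨hr, by omega⟩ s ⟨hrs, hsn⟩,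
    fun h r hr s hs => h r s hr.1 hs.1 hs.2⟩

/-- for `n ≥ 3`, integers `M > 0`, coefficients `Mc r s t`
(for `1 ≤ r < s < t ≤ n`) and integers `f 1, …, f n`, the following are
equivalent: (a) for all integer families `kk, jj`, `M` divides
`∑_{r<s<t} Mc r s t (kk r · jj s · f t + f r · kk s · jj t - kk r · f s · jj t)`;
(b) for every `1 ≤ r < s ≤ n`, `M` divides
`∑_{u<r} Mc u r s · f u - ∑_{r<v<s} Mc r v s · f v + ∑_{s<w≤n} Mc r s w · f w`. -/
theorem divisibility_equivalence (n : ℕ) (hn : 3 ≤ n) (M : ℤ) (hM : 0 < M)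
    (Mc : ℕ → ℕ → ℕ → ℤ) (f : ℕ → ℤ) :
    (∀ kk jj : ℕ → ℤ,
      M ∣ ∑ r ∈ Icc 1 n, ∑ s ∈ Icc (r + 1) n, ∑ t ∈ Icc (s + 1) n,
        Mc r s t * (kk r * jj s * f t + f r * kk s * jj t - kk r * f s * jj t)) ↔
    (∀ r s : ℕ, 1 ≤ r → r < s → s ≤ n →
      M ∣ ((∑ u ∈ Icc 1 (r - 1), Mc u r s * f u) -
            (∑ v ∈ Icc (r + 1) (s - 1), Mc r v s * f v) +
            (∑ w ∈ Icc (s + 1) n, Mc r s w * f w))) :=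
  divisibility_equivalence_general n M Mc f
end
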